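/- Let A = (Q, Σ, δ, ρ) be an invertible reversible Mealy automaton and let u ∈ Q⁺ be a nonempty word, say of length m. Then the following are equivalent: (i) the action ρ_u : Σ* → Σ* induced by u has finite order, i.e., there exist p < q with ρ_u^p = ρ_u^q; (ii) the sizes of the connected components of the words uⁿ (n ∈ ℕ) are bounded, i.e., there exists N such that for every n ≥ 1 the connected component of uⁿ in A^{nm} has cardinality at most N. -/

import Mathlib

/-!
Mealy automata: common definitions.

A Mealy automaton on stateset `Q` and alphabet `Γ` is given by transition
functions `δ : Γ → Q → Q` (for each input letter) and output functions
`ρ : Q → Γ → Γ` (for each state); it has a transition `x —i|j→ y` exactly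
when `δ i x = y` and `ρ x i = j`.
-/

/-- Extended output function `ρ_x : Γ* → Γ*` of a single state. -/
def rhoStar {Q Γ : Type*} (δ : Γ → Q → Q) (ρ : Q → Γ → Γ) : Q → List Γ → List Γ
  | _, [] => []
  | x, i :: s => ρ x i :: rhoStar δ ρ (δ i x) s

/-- `ρ_u : Γ* → Γ*` for a word `u = x₁⋯x_n` of states: `ρ_u = ρ_{x_n} ∘ ⋯ ∘ ρ_{x₁}`. -/
def rhoWord {Q Γ : Type*} (δ : Γ → Q → Q) (ρ : Q → Γ → Γ) : List Q → List Γ → List Γ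
  | [], s => s
  | x :: u, s => rhoWord δ ρ u (rhoStar δ ρ x s)

/-- `ρ_u : Γ → Γ` on single letters (the output function of the power automaton). -/
def rhoLetter {Q Γ : Type*} (ρ : Q → Γ → Γ) : List Q → Γ → Γ
  | [], i => i
  | x :: u, i => rhoLetter ρ u (ρ x i)

/-- Extended transition function `δ_i : Q* → Q*` (the transition function of powers). -/
def deltaStar {Q Γ : Type*} (δ : Γ → Q → Q) (ρ : Q → Γ → Γ) : Γ → List Q → List Q
  | _, [] => []
  | i, x :: u => δ i x :: deltaStar δ ρ (ρ x i) u

/-- Sequential application `δ_s = δ_{s_n} ∘ ⋯ ∘ δ_{s₁}` of the letters of a word `s`. -/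
def applyWord {S Γ : Type*} (d : Γ → S → S) : List Γ → S → S
  | [], x => x
  | i :: s, x => applyWord d s (d i x)

/-- The orbit `{δ_s(x) : s ∈ Γ*}` of a state: for reversible automata this is
exactly the (strongly) connected component of `x`. -/
def orbitOf {S Γ : Type*} (d : Γ → S → S) (x : S) : Set S :=
  {y | ∃ s : List Γ, applyWord d s x = y}

/-- An automaton is invertible when every output function is a permutation. -/
def MInvertible {Q Γ : Type*} (ρ : Q → Γ → Γ) : Prop := ∀ x, Function.Bijective (ρ x)

/-- An automaton is reversible when every transition function is a permutation. -/
def MReversible {Q Γ : Type*} (δ : Γ → Q → Q) : Prop := ∀ i, Function.Bijective (δ i)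

/-- Coreversibility: `δ_i(y) = δ_{i'}(z)` and `ρ_y(i) = ρ_z(i')` imply `y = z`. -/
def MCoreversible {Q Γ : Type*} (δ : Γ → Q → Q) (ρ : Q → Γ → Γ) : Prop :=
  ∀ y z : Q, ∀ i i' : Γ, δ i y = δ i' z → ρ y i = ρ z i' → y = z

/-- Bireversible: invertible, reversible and coreversible. -/
def MBireversible {Q Γ : Type*} (δ : Γ → Q → Q) (ρ : Q → Γ → Γ) : Prop :=
  MInvertible ρ ∧ MReversible δ ∧ MCoreversible δ ρ

/-- Connectedness: every state is reachable from every state. -/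
def MConnected {Q Γ : Type*} (δ : Γ → Q → Q) : Prop :=
  ∀ x y : Q, ∃ s : List Γ, applyWord δ s x = y

/-- Invertibility of a component `C` (as an automaton with stateset `C`). -/
def CompInvertible {S Γ : Type*} (r : S → Γ → Γ) (C : Set S) : Prop :=
  ∀ x ∈ C, Function.Bijective (r x)

/-- Reversibility of a component `C`: each transition function permutes `C`. -/
def CompReversible {S Γ : Type*} (d : Γ → S → S) (C : Set S) : Prop :=
  ∀ i : Γ, Set.BijOn (d i) C C

/-- Coreversibility of a component `C` (as an automaton with stateset `C`). -/
def CompCoreversible {S Γ : Type*} (d : Γ → S → S) (r : S → Γ → Γ) (C : Set S) : Prop :=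
  ∀ y ∈ C, ∀ z ∈ C, ∀ i i' : Γ, d i y = d i' z → r y i = r z i' → y = z

/-- Bireversibility of a component `C` (as an automaton with stateset `C`). -/
def CompBireversible {S Γ : Type*} (d : Γ → S → S) (r : S → Γ → Γ) (C : Set S) : Prop :=
  CompInvertible r C ∧ CompReversible d C ∧ CompCoreversible d r C

/-- Transition functions of the product `A × B` of two Mealy automata. -/
def prodD {Q Q' Γ : Type*} (δ : Γ → Q → Q) (ρ : Q → Γ → Γ) (δ' : Γ → Q' → Q') :
    Γ → Q × Q' → Q × Q' :=
  fun i p => (δ i p.1, δ' (ρ p.1 i) p.2)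

/-- Output functions of the product `A × B` of two Mealy automata. -/
def prodR {Q Q' Γ : Type*} (ρ : Q → Γ → Γ) (ρ' : Q' → Γ → Γ) : Q × Q' → Γ → Γ :=
  fun p i => ρ' p.2 (ρ p.1 i)

/-- `u^n`: the `n`-fold concatenation of a word with itself. -/
def wordPow {Q : Type*} (u : List Q) : ℕ → List Q
  | 0 => []
  | n + 1 => u ++ wordPow u n

/-!
If `ρ_u^k = id`, then `ρ_{u^k}` fixes every letter along the whole component of `u^k`, so the
transitions act on `u^{kn}` blockwise, `δ_s(u^{kn}) = (δ_s(u^k))^n`. Since transitions commute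
with truncation, the component of `u^n` is the image of that of `u^{kn}` under truncation, so it
has at most as many elements as the component of `u^k`.

Conversely, truncation makes the component sizes of the `u^n` nondecreasing; if they are bounded,
the maximum is attained at some `u^{n₀}`, and truncation is then injective on the component of
every `u^{n₀+a}`. The action of a word is determined by the letter permutations `ρ_w` of the
words `w` of its component, hence here by the map `w.take |u^{n₀}| ↦ ρ_w`, a relation between the
finite component of `u^{n₀}` and the finite set `Γ → Γ`. By pigeonhole two of these relations
coincide, which gives `ρ_u^{n₀+a} = ρ_u^{n₀+b}` with `a < b`.
-/

lemma exists_forall_apply_le_of_forall_le {α : Type*} [Nonempty α] {f : α → ℕ} {N : ℕ}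
    (h : ∀ a, f a ≤ N) : ∃ a₀, ∀ a, f a ≤ f a₀ := by
  have hbdd : BddAbove (Set.range f) := ⟨N, by rintro _ ⟨a, rfl⟩; exact h a⟩
  obtain ⟨a₀, ha₀⟩ := Nat.sSup_mem (Set.range_nonempty f) hbdd
  exact ⟨a₀, fun a => ha₀ ▸ le_csSup hbdd ⟨a, rfl⟩⟩

section WordPow

variable {Q : Type*}

lemma wordPow_add (u : List Q) (a b : ℕ) :
    wordPow u (a + b) = wordPow u a ++ wordPow u b := by
  induction a with
  | zero => simp [wordPow]
  | succ a ih => simp [wordPow, Nat.succ_add, ih]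

lemma wordPow_mul (u : List Q) (k n : ℕ) :
    wordPow (wordPow u k) n = wordPow u (k * n) := by
  induction n with
  | zero => rfl
  | succ n ih => rw [wordPow, ih, ← wordPow_add, Nat.mul_succ, Nat.add_comm]

end WordPow

section Orbit

variable {S T Γ : Type*}

lemma applyWord_append (d : Γ → S → S) (s t : List Γ) (x : S) :
    applyWord d (s ++ t) x = applyWord d t (applyWord d s x) := by
  induction s generalizing x with
  | nil => rfl
  | cons i s ih => exact ih (d i x)

lemma mem_orbitOf_self (d : Γ → S → S) (x : S) : x ∈ orbitOf d x := ⟨[], rfl⟩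

lemma orbitOf_subset_of_mem {d : Γ → S → S} {x y : S} (h : y ∈ orbitOf d x) :
    orbitOf d y ⊆ orbitOf d x := by
  obtain ⟨s, rfl⟩ := h
  rintro _ ⟨t, rfl⟩
  exact ⟨s ++ t, applyWord_append d s t x⟩

lemma apply_mem_orbitOf {d : Γ → S → S} {x y : S} (h : y ∈ orbitOf d x) (i : Γ) :
    d i y ∈ orbitOf d x :=
  orbitOf_subset_of_mem h ⟨[i], rfl⟩

lemma applyWord_semiconj {d : Γ → S → S} {d' : Γ → T → T} (π : S → T)
    (h : ∀ i x, π (d i x) = d' i (π x)) (s : List Γ) (x : S) :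
    π (applyWord d s x) = applyWord d' s (π x) := by
  induction s generalizing x with
  | nil => rfl
  | cons i s ih => rw [applyWord, applyWord, ih, h]

lemma image_orbitOf_of_semiconj {d : Γ → S → S} {d' : Γ → T → T} (π : S → T)
    (h : ∀ i x, π (d i x) = d' i (π x)) (x : S) :
    π '' orbitOf d x = orbitOf d' (π x) := by
  ext y
  constructor
  · rintro ⟨_, ⟨s, rfl⟩, rfl⟩
    exact ⟨s, (applyWord_semiconj π h s x).symm⟩
  · rintro ⟨s, rfl⟩
    exact ⟨_, ⟨s, rfl⟩, applyWord_semiconj π h s x⟩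

end Orbit

section PowerAutomaton

variable {Q Γ : Type*} (δ : Γ → Q → Q) (ρ : Q → Γ → Γ)

lemma rhoWord_nil (w : List Q) : rhoWord δ ρ w [] = [] := by
  induction w with
  | nil => rfl
  | cons x w ih => exact ih

lemma rhoWord_cons (w : List Q) (i : Γ) (s : List Γ) :
    rhoWord δ ρ w (i :: s) = rhoLetter ρ w i :: rhoWord δ ρ (deltaStar δ ρ i w) s := by
  induction w generalizing i s with
  | nil => rfl
  | cons x w ih => exact ih (ρ x i) (rhoStar δ ρ (δ i x) s)

lemma rhoWord_append (a b : List Q) (s : List Γ) :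
    rhoWord δ ρ (a ++ b) s = rhoWord δ ρ b (rhoWord δ ρ a s) := by
  induction a generalizing s with
  | nil => rfl
  | cons x a ih => exact ih _

lemma rhoWord_wordPow (u : List Q) (n : ℕ) :
    rhoWord δ ρ (wordPow u n) = (rhoWord δ ρ u)^[n] := by
  induction n with
  | zero => rfl
  | succ n ih =>
    funext s
    rw [wordPow, rhoWord_append, ih, Function.iterate_succ_apply]

lemma rhoStar_injective (hInv : MInvertible ρ) (x : Q) :
    Function.Injective (rhoStar δ ρ x) := by
  intro s t h
  induction s generalizing x t with
  | nil => cases t <;> simp_all [rhoStar]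
  | cons i s ih =>
    cases t with
    | nil => simp [rhoStar] at h
    | cons j t =>
      obtain ⟨hij, hst⟩ := List.cons.inj h
      obtain rfl := (hInv x).injective hij
      rw [ih _ hst]

lemma rhoWord_injective (hInv : MInvertible ρ) (w : List Q) :
    Function.Injective (rhoWord δ ρ w) := by
  induction w with
  | nil => exact Function.injective_id
  | cons x w ih => exact (ih.comp (rhoStar_injective δ ρ hInv x) :)

lemma deltaStar_length (i : Γ) (w : List Q) : (deltaStar δ ρ i w).length = w.length := by
  induction w generalizing i with
  | nil => rfl
  | cons x w ih => simp [deltaStar, ih]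

lemma deltaStar_append (i : Γ) (a b : List Q) :
    deltaStar δ ρ i (a ++ b) = deltaStar δ ρ i a ++ deltaStar δ ρ (rhoLetter ρ a i) b := by
  induction a generalizing i with
  | nil => rfl
  | cons x a ih => simp [deltaStar, rhoLetter, ih]

lemma take_deltaStar (L : ℕ) (i : Γ) (w : List Q) :
    (deltaStar δ ρ i w).take L = deltaStar δ ρ i (w.take L) := by
  induction w generalizing i L with
  | nil => simp [deltaStar]
  | cons x w ih => cases L <;> simp [deltaStar, ih]

lemma orbitOf_deltaStar_finite [Finite Q] (v : List Q) : (orbitOf (deltaStar δ ρ) v).Finite := by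
  refine (List.finite_length_eq Q v.length).subset ?_
  rintro _ ⟨s, rfl⟩
  induction s generalizing v with
  | nil => rfl
  | cons i s ih => exact (ih _).trans (deltaStar_length δ ρ i v)

lemma orbitOf_deltaStar_take (L : ℕ) (w : List Q) :
    orbitOf (deltaStar δ ρ) (w.take L) = List.take L '' orbitOf (deltaStar δ ρ) w :=
  (image_orbitOf_of_semiconj _ (fun i w => take_deltaStar δ ρ L i w) w).symm

lemma orbitOf_deltaStar_eq_image_take (a b : List Q) :
    orbitOf (deltaStar δ ρ) a = List.take a.length '' orbitOf (deltaStar δ ρ) (a ++ b) := by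
  rw [← orbitOf_deltaStar_take, List.take_left]

lemma ncard_orbitOf_deltaStar_le_append [Finite Q] (a b : List Q) :
    (orbitOf (deltaStar δ ρ) a).ncard ≤ (orbitOf (deltaStar δ ρ) (a ++ b)).ncard := by
  rw [orbitOf_deltaStar_eq_image_take δ ρ a b]
  exact Set.ncard_image_le (orbitOf_deltaStar_finite δ ρ _)

lemma injOn_take_orbitOf_deltaStar [Finite Q] (a b : List Q)
    (h : (orbitOf (deltaStar δ ρ) (a ++ b)).ncard ≤ (orbitOf (deltaStar δ ρ) a).ncard) :
    Set.InjOn (List.take a.length) (orbitOf (deltaStar δ ρ) (a ++ b)) := by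
  have himage := orbitOf_deltaStar_eq_image_take δ ρ a b
  refine Set.injOn_of_ncard_image_eq ?_ (orbitOf_deltaStar_finite δ ρ _)
  rw [← himage]
  exact le_antisymm (himage ▸ Set.ncard_image_le (orbitOf_deltaStar_finite δ ρ _)) h

lemma rhoWord_eq_of_rhoLetter_eq (L : ℕ) {x y : List Q}
    (h : ∀ w ∈ orbitOf (deltaStar δ ρ) x, ∀ w' ∈ orbitOf (deltaStar δ ρ) y,
      w.take L = w'.take L → rhoLetter ρ w = rhoLetter ρ w')
    (hxy : x.take L = y.take L) :
    rhoWord δ ρ x = rhoWord δ ρ y := by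
  funext s
  induction s generalizing x y with
  | nil => rw [rhoWord_nil, rhoWord_nil]
  | cons i s ih =>
    rw [rhoWord_cons, rhoWord_cons,
      h x (mem_orbitOf_self _ x) y (mem_orbitOf_self _ y) hxy]
    congr 1
    refine ih (fun w hw w' hw' => h w ?_ w' ?_) ?_
    · exact orbitOf_subset_of_mem (apply_mem_orbitOf (mem_orbitOf_self _ x) i) hw
    · exact orbitOf_subset_of_mem (apply_mem_orbitOf (mem_orbitOf_self _ y) i) hw'
    · rw [take_deltaStar, take_deltaStar, hxy]

variable {δ ρ}

lemma rhoLetter_eq_self_of_rhoWord_eq_id {v : List Q} (hv : rhoWord δ ρ v = id) (i : Γ) :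
    rhoLetter ρ v i = i := by
  simpa [rhoWord_cons, rhoWord_nil] using congrFun hv [i]

lemma rhoWord_deltaStar_eq_id {v : List Q} (hv : rhoWord δ ρ v = id) (i : Γ) :
    rhoWord δ ρ (deltaStar δ ρ i v) = id := by
  funext s
  exact (List.cons.inj (rhoWord_cons δ ρ v i s ▸ congrFun hv (i :: s))).2

lemma deltaStar_wordPow {v : List Q} (hv : rhoWord δ ρ v = id) (i : Γ) (n : ℕ) :
    deltaStar δ ρ i (wordPow v n) = wordPow (deltaStar δ ρ i v) n := by
  induction n with
  | zero => rfl
  | succ n ih => rw [wordPow, deltaStar_append, rhoLetter_eq_self_of_rhoWord_eq_id hv, ih, wordPow]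

lemma applyWord_deltaStar_wordPow {v : List Q} (hv : rhoWord δ ρ v = id) (s : List Γ) (n : ℕ) :
    applyWord (deltaStar δ ρ) s (wordPow v n) = wordPow (applyWord (deltaStar δ ρ) s v) n := by
  induction s generalizing v with
  | nil => rfl
  | cons i s ih =>
    rw [applyWord, applyWord, deltaStar_wordPow hv, ih (rhoWord_deltaStar_eq_id hv i)]

lemma ncard_orbitOf_deltaStar_wordPow_le [Finite Q] {v : List Q} (hv : rhoWord δ ρ v = id)
    (n : ℕ) :
    (orbitOf (deltaStar δ ρ) (wordPow v n)).ncard ≤ (orbitOf (deltaStar δ ρ) v).ncard := by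
  have himage : orbitOf (deltaStar δ ρ) (wordPow v n)
      = (wordPow · n) '' orbitOf (deltaStar δ ρ) v := by
    ext w
    constructor
    · rintro ⟨s, rfl⟩
      exact ⟨_, ⟨s, rfl⟩, (applyWord_deltaStar_wordPow hv s n).symm⟩
    · rintro ⟨_, ⟨s, rfl⟩, rfl⟩
      exact ⟨s, applyWord_deltaStar_wordPow hv s n⟩
  rw [himage]
  exact Set.ncard_image_le (orbitOf_deltaStar_finite δ ρ v)

variable (δ ρ)

lemma ncard_orbitOf_deltaStar_wordPow_le_of_iterate_eq_id [Finite Q] (u : List Q) {k : ℕ}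
    (hk : 0 < k) (h : (rhoWord δ ρ u)^[k] = id) (n : ℕ) :
    (orbitOf (deltaStar δ ρ) (wordPow u n)).ncard
      ≤ (orbitOf (deltaStar δ ρ) (wordPow u k)).ncard := by
  have hv : rhoWord δ ρ (wordPow u k) = id := by rw [rhoWord_wordPow, h]
  calc (orbitOf (deltaStar δ ρ) (wordPow u n)).ncard
      ≤ (orbitOf (deltaStar δ ρ) (wordPow u n ++ wordPow u ((k - 1) * n))).ncard :=
        ncard_orbitOf_deltaStar_le_append δ ρ _ _
    _ = (orbitOf (deltaStar δ ρ) (wordPow (wordPow u k) n)).ncard := by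
        rw [wordPow_mul, ← wordPow_add]
        congr 3
        nth_rw 1 [← Nat.one_mul n]
        rw [← Nat.add_mul, Nat.add_sub_cancel' hk]
    _ ≤ (orbitOf (deltaStar δ ρ) (wordPow u k)).ncard := ncard_orbitOf_deltaStar_wordPow_le hv n

lemma exists_lt_rhoWord_append_eq [Finite Q] [Finite Γ] (v : List Q) (t : ℕ → List Q)
    (h : ∀ a, (orbitOf (deltaStar δ ρ) (v ++ t a)).ncard ≤ (orbitOf (deltaStar δ ρ) v).ncard) :
    ∃ a b, a < b ∧ rhoWord δ ρ (v ++ t a) = rhoWord δ ρ (v ++ t b) := by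
  let graph : ℕ → Set (List Q × (Γ → Γ)) := fun a =>
    (fun w => (w.take v.length, rhoLetter ρ w)) '' orbitOf (deltaStar δ ρ) (v ++ t a)
  have hgraph : ∀ a, graph a ∈ {R | R ⊆ orbitOf (deltaStar δ ρ) v ×ˢ Set.univ} := by
    rintro a _ ⟨w, hw, rfl⟩
    exact ⟨orbitOf_deltaStar_eq_image_take δ ρ v (t a) ▸ ⟨w, hw, rfl⟩, trivial⟩
  obtain ⟨a, b, hab, hab_graph⟩ := Set.Finite.exists_lt_map_eq_of_forall_mem hgraph
    ((orbitOf_deltaStar_finite δ ρ v).prod Set.finite_univ).finite_subsets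
  refine ⟨a, b, hab, rhoWord_eq_of_rhoLetter_eq δ ρ v.length ?_ (by simp)⟩
  intro w hw w' hw' hww'
  obtain ⟨w'', hw'', hpair⟩ : (w.take v.length, rhoLetter ρ w) ∈ graph b :=
    hab_graph ▸ ⟨w, hw, rfl⟩
  obtain ⟨htake, hrho⟩ := Prod.mk.inj hpair
  rw [← hrho, injOn_take_orbitOf_deltaStar δ ρ v (t b) (h b) hw'' hw' (htake.trans hww')]

end PowerAutomaton

theorem finite_order_iff_bounded_components_of_powers_general
    {Q Γ : Type*} [Fintype Q] [Fintype Γ]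
    (δ : Γ → Q → Q) (ρ : Q → Γ → Γ)
    (hInv : MInvertible ρ)
    (u : List Q) :
    (∃ p q : ℕ, p < q ∧ (rhoWord δ ρ u)^[p] = (rhoWord δ ρ u)^[q]) ↔
      ∃ N : ℕ, ∀ n : ℕ, 1 ≤ n →
        (orbitOf (deltaStar δ ρ) (wordPow u n)).ncard ≤ N := by
  constructor
  · rintro ⟨p, q, hpq, h⟩
    have hperiod : (rhoWord δ ρ u)^[q - p] = id := funext fun s =>
      Function.iterate_cancel (rhoWord_injective δ ρ hInv u) (congrFun h s).symm
    exact ⟨_, fun n _ => ncard_orbitOf_deltaStar_wordPow_le_of_iterate_eq_id δ ρ u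
      (Nat.sub_pos_of_lt hpq) hperiod n⟩
  · rintro ⟨N, hN⟩
    have hbound : ∀ n, (orbitOf (deltaStar δ ρ) (wordPow u n)).ncard ≤ N
      | 0 => (ncard_orbitOf_deltaStar_le_append δ ρ [] (wordPow u 1)).trans (hN 1 le_rfl)
      | n + 1 => hN (n + 1) (Nat.le_add_left 1 n)
    obtain ⟨n₀, hn₀⟩ := exists_forall_apply_le_of_forall_le hbound
    obtain ⟨a, b, hab, heq⟩ := exists_lt_rhoWord_append_eq δ ρ (wordPow u n₀) (wordPow u)
      fun a => wordPow_add u n₀ a ▸ hn₀ (n₀ + a)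
    refine ⟨n₀ + a, n₀ + b, Nat.add_lt_add_left hab n₀, ?_⟩
    rw [← rhoWord_wordPow, ← rhoWord_wordPow, wordPow_add, wordPow_add, heq]

/-- In an invertible reversible Mealy automaton, a nonempty
word `u` of length `m` induces an action of finite order (there are `p < q`
with `ρ_u^p = ρ_u^q`) if and only if the sizes of the connected components of
the words `u^n` in `A^{nm}` are bounded. -/
theorem finite_order_iff_bounded_components_of_powers
    {Q Γ : Type*} [Fintype Q] [Fintype Γ] [Nonempty Q] [Nonempty Γ]
    (δ : Γ → Q → Q) (ρ : Q → Γ → Γ)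
    (hInv : MInvertible ρ) (hRev : MReversible δ)
    (u : List Q) (hu : u ≠ []) (m : ℕ) (hm : u.length = m) :
    (∃ p q : ℕ, p < q ∧ (rhoWord δ ρ u)^[p] = (rhoWord δ ρ u)^[q]) ↔
      ∃ N : ℕ, ∀ n : ℕ, 1 ≤ n →
        (orbitOf (deltaStar δ ρ) (wordPow u n)).ncard ≤ N :=
  finite_order_iff_bounded_components_of_powers_general δ ρ hInv u
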